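/- Let (φ_t) and (φ̃_t) be non-elliptic semigroups in the unit disc 𝔻 with Koenigs functions h and h̃, total speed v(t) of (φ_t) and orthogonal speed ṽ^o(t) of (φ̃_t). If h(𝔻) ⊆ h̃(𝔻), then liminf_{t→+∞} [v(t) − ṽ^o(t)] > −∞. -/

import Mathlib

open Complex Filter Topology Set MeasureTheory

noncomputable section

/-- The unit disc in the complex plane. -/
def unitDisc : Set ℂ := {z : ℂ | ‖z‖ < 1}

/-- The inverse hyperbolic tangent: `arctanh x = (1/2)·log((1+x)/(1−x))`. -/
def arctanh (x : ℝ) : ℝ := (1 / 2) * Real.log ((1 + x) / (1 - x))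

/-- The hyperbolic distance on the unit disc:
`k_𝔻(z,w) = arctanh |(z−w)/(1−conj(z)·w)|`. -/
def kD (z w : ℂ) : ℝ :=
  arctanh (‖(z - w) / (1 - (starRingEnd ℂ) z * w)‖)

/-- `φ` is a continuous one-parameter semigroup of holomorphic self-maps of the unit disc. -/
structure IsDiscSemigroup (φ : ℝ → ℂ → ℂ) : Prop where
  mapsTo : ∀ t : ℝ, 0 ≤ t → Set.MapsTo (φ t) unitDisc unitDisc
  holo : ∀ t : ℝ, 0 ≤ t → DifferentiableOn ℂ (φ t) unitDisc
  id0 : ∀ z ∈ unitDisc, φ 0 z = z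
  comp : ∀ s t : ℝ, 0 ≤ s → 0 ≤ t → ∀ z ∈ unitDisc, φ (t + s) z = φ t (φ s z)
  cont : ContinuousOn (fun p : ℝ × ℂ => φ p.1 p.2) (Set.Ici 0 ×ˢ unitDisc)

/-- A semigroup in the disc is non-elliptic if it has no fixed point in the disc
for positive times. -/
structure IsNonElliptic (φ : ℝ → ℂ → ℂ) extends IsDiscSemigroup φ : Prop where
  noFixedPoint : ∀ t : ℝ, 0 < t → ∀ z ∈ unitDisc, φ t z ≠ z

/-- `τ` is the Denjoy-Wolff point of the semigroup `φ`: a boundary point to which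
all orbits converge. -/
def IsDenjoyWolff (φ : ℝ → ℂ → ℂ) (τ : ℂ) : Prop :=
  ‖τ‖ = 1 ∧ ∀ z ∈ unitDisc, Tendsto (fun t => φ t z) atTop (𝓝 τ)

/-- `h` is a Koenigs function of the semigroup `φ`: univalent on the disc with
`h(φ_t(z)) = h(z) + it`. -/
def IsKoenigs (φ : ℝ → ℂ → ℂ) (h : ℂ → ℂ) : Prop :=
  DifferentiableOn ℂ h unitDisc ∧ Set.InjOn h unitDisc ∧
    ∀ t : ℝ, 0 ≤ t → ∀ z ∈ unitDisc, h (φ t z) = h z + Complex.I * t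

/-- `p` is the hyperbolic orthogonal projection onto the geodesic `(−1,1)·τ`:
for every `z` in the disc, `p z` lies on the geodesic and minimizes the hyperbolic
distance from `z` to the geodesic. -/
def IsOrthProjection (τ : ℂ) (p : ℂ → ℂ) : Prop :=
  ∀ z ∈ unitDisc,
    (∃ r : ℝ, r ∈ Set.Ioo (-1 : ℝ) 1 ∧ p z = (r : ℂ) * τ) ∧
    ∀ r : ℝ, r ∈ Set.Ioo (-1 : ℝ) 1 → kD z (p z) ≤ kD z ((r : ℂ) * τ)

/-- The total speed `v(t) = k_𝔻(0, φ_t(0))` of a semigroup. -/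
def totalSpeed (φ : ℝ → ℂ → ℂ) (t : ℝ) : ℝ := kD 0 (φ t 0)

/-- The orthogonal speed `v^o(t) = k_𝔻(0, π(φ_t(0)))` of a semigroup, relative to the
orthogonal projection `p` onto the geodesic `(−1,1)·τ`. -/
def orthSpeed (φ : ℝ → ℂ → ℂ) (p : ℂ → ℂ) (t : ℝ) : ℝ := kD 0 (p (φ t 0))

/-- `δ⁺(t)`: the truncated distance from `z₀ + it` to the part of the complement of `Ω`
lying to the right of the vertical line through `z₀`. -/
def deltaPlus (Ω : Set ℂ) (z₀ : ℂ) (t : ℝ) : ℝ :=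
  min t (sInf {d : ℝ | ∃ w : ℂ, w ∉ Ω ∧ z₀.re ≤ w.re ∧ d = ‖w - (z₀ + Complex.I * t)‖})

/-- `δ⁻(t)`: the truncated distance from `z₀ + it` to the part of the complement of `Ω`
lying to the left of the vertical line through `z₀`. -/
def deltaMinus (Ω : Set ℂ) (z₀ : ℂ) (t : ℝ) : ℝ :=
  min t (sInf {d : ℝ | ∃ w : ℂ, w ∉ Ω ∧ w.re ≤ z₀.re ∧ d = ‖w - (z₀ + Complex.I * t)‖})

/-- `Ω` is quasi-symmetric with respect to vertical axes. -/
def QuasiSymmetric (Ω : Set ℂ) : Prop :=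
  ∃ z₀ ∈ Ω, ∃ K : ℝ, 0 < K ∧ ∀ t : ℝ, 0 ≤ t →
    K⁻¹ * deltaMinus Ω z₀ t ≤ deltaPlus Ω z₀ t ∧ deltaPlus Ω z₀ t ≤ K * deltaMinus Ω z₀ t

/-- `Ω` is starlike with respect to `w₀`: every segment from `w₀` to a point of `Ω`
is contained in `Ω`. -/
def StarlikeWrt (Ω : Set ℂ) (w₀ : ℂ) : Prop :=
  ∀ w ∈ Ω, ∀ s : ℝ, s ∈ Set.Icc (0 : ℝ) 1 → (1 - (s : ℂ)) * w₀ + (s : ℂ) * w ∈ Ω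

/-- The orbit of `0` converges non-tangentially to `τ`:
`limsup_{t→+∞} |τ − φ_t(0)|/(1 − |φ_t(0)|) < +∞`. -/
def ConvergesNonTangentially (φ : ℝ → ℂ → ℂ) (τ : ℂ) : Prop :=
  Filter.limsup (fun t : ℝ =>
    ((‖τ - φ t 0‖ / (1 - ‖φ t 0‖) : ℝ) : EReal)) atTop < ⊤

/-- `f` is eventually non-decreasing. -/
def EventuallyNondecreasing (f : ℝ → ℝ) : Prop :=
  ∃ T : ℝ, ∀ s t : ℝ, T ≤ s → s ≤ t → f s ≤ f t

/-- The Cayley transform from the unit disc to the right half-plane. -/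
def cayley (z : ℂ) : ℂ := (1 + z) / (1 - z)

/-- The inverse Cayley transform, from the right half-plane to the unit disc. -/
def cayleyInv (w : ℂ) : ℂ := (w - 1) / (w + 1)

/-- `Θ_ρ := {iy : y ∈ ℝ, |y| ≥ ρ}`, a subset of the imaginary axis. -/
def Theta (ρ : ℝ) : Set ℂ := {z : ℂ | ∃ y : ℝ, z = Complex.I * (y : ℂ) ∧ ρ ≤ |y|}

/-- `Γ*_t := {iy : |y| ≥ inf_{u ≥ t} ρ_u}`. -/
def GammaStar (ρ : ℝ → ℝ) (t : ℝ) : Set ℂ :=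
  {z : ℂ | ∃ y : ℝ, z = Complex.I * (y : ℂ) ∧ sInf {r : ℝ | ∃ u : ℝ, t ≤ u ∧ r = ρ u} ≤ |y|}

/-- The harmonic measure at `w` (a point of the right half-plane) of a Borel subset `E`
of the imaginary axis, with respect to the right half-plane:
`ω(w,E,ℍ) = (1/π) ∫_{{s : is ∈ E}} Re w/((Re w)² + (Im w − s)²) ds`. -/
def omegaH (w : ℂ) (E : Set ℂ) : ℝ :=
  (1 / Real.pi) *
    ∫ s in {s : ℝ | Complex.I * (s : ℂ) ∈ E}, w.re / (w.re ^ 2 + (w.im - s) ^ 2)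

/-- The Euclidean arclength of the closed arc of the unit circle containing `1`
with endpoints `a` and `conj a` (where `Im a > 0`), namely `2·arg a`. -/
def arcLength (a : ℂ) : ℝ := 2 * Complex.arg a

/-- The harmonic measure at `0` with respect to the unit disc of the closed arc of the
unit circle containing `1` with endpoints `a` and `conj a`: `ℓ(A)/(2π)`. -/
def omegaDiscZero (a : ℂ) : ℝ := arcLength a / (2 * Real.pi)

/-- `Π_α := {z ∈ ℂ : Im z > |Re z|^α}`. -/
def PiDom (α : ℝ) : Set ℂ := {z : ℂ | |z.re| ^ α < z.im}

/-- `W(θ) := {z ≠ 0 : arg z ∈ (π/2 − θ, π/2)}`. -/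
def Wsector (θ : ℝ) : Set ℂ :=
  {z : ℂ | z ≠ 0 ∧ Complex.arg z ∈ Set.Ioo (Real.pi / 2 - θ) (Real.pi / 2)}

/-- `Ξ(α,θ) := ({Re z ≤ 0} ∩ Π_α) ∪ W(θ)`. -/
def Xi (α θ : ℝ) : Set ℂ := ({z : ℂ | z.re ≤ 0} ∩ PiDom α) ∪ Wsector θ


/-!
Since `h(𝔻) ⊆ h̃(𝔻)` and `h̃` is univalent, `G := h̃⁻¹ ∘ h` is a holomorphic self-map of `𝔻`,
and the Koenigs equations give `G ∘ φ_t = ψ_t ∘ G`. The triangle inequality and the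
Schwarz–Pick lemma, applied to `ψ_t` and to `G`, bound `k_𝔻(0, ψ_t(0))` by
`k_𝔻(0, φ_t(0)) + 2 k_𝔻(0, G(0))`. Finally, the hyperbolic projection onto a diameter does not
move a point farther from `0`, so `ṽ^o(t) ≤ v(t) + 2 k_𝔻(0, G(0))` for all `t ≥ 0`.
-/

open ComplexConjugate

lemma unitDisc_eq_ball : unitDisc = Metric.ball 0 1 := by
  ext z
  simp [unitDisc]

lemma isOpen_unitDisc : IsOpen unitDisc :=
  unitDisc_eq_ball ▸ Metric.isOpen_ball

lemma zero_mem_unitDisc : (0 : ℂ) ∈ unitDisc := by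
  simp [unitDisc]

def discMobius (a z : ℂ) : ℂ := (a - z) / (1 - conj a * z)

lemma kD_eq_arctanh_norm_discMobius (z w : ℂ) : kD z w = arctanh ‖discMobius z w‖ := rfl

section discMobius

variable {a z w : ℂ}

lemma one_sub_conj_mul_ne_zero (ha : a ∈ unitDisc) (hz : z ∈ unitDisc) :
    1 - conj a * z ≠ 0 := by
  have hlt : ‖conj a * z‖ < 1 := by
    rw [norm_mul, norm_conj]
    exact mul_lt_one_of_nonneg_of_lt_one_left (norm_nonneg a) ha (le_of_lt hz)
  intro h
  rw [← sub_eq_zero.mp h, norm_one] at hlt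
  exact hlt.false

lemma normSq_one_sub_conj_mul_sub_normSq_sub (a z : ℂ) :
    normSq (1 - conj a * z) - normSq (a - z) = (1 - normSq a) * (1 - normSq z) := by
  apply ofReal_injective
  push_cast
  simp only [← mul_conj, map_sub, map_mul, map_one, conj_conj]
  ring

lemma one_sub_sq_norm_discMobius (ha : a ∈ unitDisc) (hz : z ∈ unitDisc) :
    1 - ‖discMobius a z‖ ^ 2 = (1 - ‖a‖ ^ 2) * (1 - ‖z‖ ^ 2) / ‖1 - conj a * z‖ ^ 2 := by
  have hden : ‖1 - conj a * z‖ ^ 2 ≠ 0 := by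
    simpa using one_sub_conj_mul_ne_zero ha hz
  rw [discMobius, norm_div, div_pow, eq_div_iff hden, sub_mul, div_mul_cancel₀ _ hden]
  simp only [Complex.sq_norm]
  linear_combination normSq_one_sub_conj_mul_sub_normSq_sub a z

lemma norm_discMobius_lt_one (ha : a ∈ unitDisc) (hz : z ∈ unitDisc) :
    ‖discMobius a z‖ < 1 := by
  have ha' : ‖a‖ < 1 := ha
  have hz' : ‖z‖ < 1 := hz
  have hpos : 0 < 1 - ‖discMobius a z‖ ^ 2 := by
    rw [one_sub_sq_norm_discMobius ha hz]
    have hden := one_sub_conj_mul_ne_zero ha hz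
    have h1a : 0 < 1 - ‖a‖ ^ 2 := by nlinarith [norm_nonneg a]
    have h1z : 0 < 1 - ‖z‖ ^ 2 := by nlinarith [norm_nonneg z]
    positivity
  nlinarith [norm_nonneg (discMobius a z)]

lemma discMobius_mapsTo (ha : a ∈ unitDisc) : MapsTo (discMobius a) unitDisc unitDisc :=
  fun _ hz => norm_discMobius_lt_one ha hz

lemma differentiableOn_discMobius (ha : a ∈ unitDisc) :
    DifferentiableOn ℂ (discMobius a) unitDisc :=
  ((differentiableOn_const a).sub differentiableOn_id).div
    ((differentiableOn_const 1).sub ((differentiableOn_const _).mul differentiableOn_id))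
    fun _ hz => one_sub_conj_mul_ne_zero ha hz

lemma norm_discMobius_comm (a z : ℂ) : ‖discMobius a z‖ = ‖discMobius z a‖ := by
  rw [discMobius, discMobius, norm_div, norm_div, norm_sub_rev a z, ← norm_conj (1 - conj z * a)]
  simp only [map_sub, map_one, map_mul, conj_conj, mul_comm]

@[simp]
lemma discMobius_zero_right (a : ℂ) : discMobius a 0 = a := by
  simp [discMobius]

@[simp]
lemma discMobius_self (a : ℂ) : discMobius a a = 0 := by
  simp [discMobius]

lemma discMobius_discMobius (ha : a ∈ unitDisc) (hz : z ∈ unitDisc) :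
    discMobius a (discMobius a z) = z := by
  have hz' := one_sub_conj_mul_ne_zero ha hz
  have ha' := one_sub_conj_mul_ne_zero ha ha
  have hden : 1 - conj a * discMobius a z = (1 - conj a * a) / (1 - conj a * z) := by
    rw [discMobius, eq_div_iff hz', sub_mul, one_mul, mul_div_assoc', div_mul_cancel₀ _ hz']
    ring
  have hnum : a - discMobius a z = z * (1 - conj a * a) / (1 - conj a * z) := by
    rw [discMobius, eq_div_iff hz', sub_mul, div_mul_cancel₀ _ hz']
    ring
  rw [discMobius, hden, hnum, div_div_div_cancel_right₀ hz', mul_div_assoc, div_self ha', mul_one]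

lemma norm_discMobius_discMobius (ha : a ∈ unitDisc) (hz : z ∈ unitDisc) (hw : w ∈ unitDisc) :
    ‖discMobius (discMobius a z) (discMobius a w)‖ = ‖discMobius z w‖ := by
  have hz' := one_sub_conj_mul_ne_zero ha hz
  have hw' := one_sub_conj_mul_ne_zero ha hw
  have hz'' : 1 - a * conj z ≠ 0 := by
    simpa [mul_comm] using (map_ne_zero conj).mpr hz'
  have hnum : discMobius a z - discMobius a w
      = (conj a * a - 1) * (z - w) / ((1 - conj a * z) * (1 - conj a * w)) := by
    rw [discMobius, discMobius, div_sub_div _ _ hz' hw']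
    ring
  have hden : 1 - conj (discMobius a z) * discMobius a w
      = (1 - conj a * a) * (1 - conj z * w) / ((1 - a * conj z) * (1 - conj a * w)) := by
    rw [discMobius, discMobius, map_div₀, map_sub, map_sub, map_one, map_mul, conj_conj,
      div_mul_div_comm, one_sub_div (mul_ne_zero hz'' hw')]
    ring
  have hconj : ‖1 - a * conj z‖ = ‖1 - conj a * z‖ := by
    rw [← norm_conj]
    simp [mul_comm]
  have ha' : ‖1 - conj a * a‖ ≠ 0 := norm_ne_zero_iff.mpr (one_sub_conj_mul_ne_zero ha ha)
  rw [discMobius, hnum, hden, discMobius]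
  simp only [norm_div, norm_mul, hconj, norm_sub_rev (conj a * a) 1]
  field_simp

lemma norm_discMobius_le (ha : a ∈ unitDisc) (hz : z ∈ unitDisc) :
    ‖discMobius a z‖ ≤ (‖a‖ + ‖z‖) / (1 + ‖a‖ * ‖z‖) := by
  have ha' : ‖a‖ < 1 := ha
  have hz' : ‖z‖ < 1 := hz
  have hd : ‖1 - conj a * z‖ ≤ 1 + ‖a‖ * ‖z‖ := by
    simpa using norm_sub_le (1 : ℂ) (conj a * z)
  have hd0 : 0 < ‖1 - conj a * z‖ := norm_pos_iff.mpr (one_sub_conj_mul_ne_zero ha hz)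
  have hpq : 0 < 1 + ‖a‖ * ‖z‖ := by positivity
  have h1a : 0 ≤ 1 - ‖a‖ ^ 2 := by nlinarith [norm_nonneg a]
  have h1z : 0 ≤ 1 - ‖z‖ ^ 2 := by nlinarith [norm_nonneg z]
  have hsq : ‖discMobius a z‖ ^ 2 ≤ ((‖a‖ + ‖z‖) / (1 + ‖a‖ * ‖z‖)) ^ 2 := by
    have hle : (1 - ‖a‖ ^ 2) * (1 - ‖z‖ ^ 2) / (1 + ‖a‖ * ‖z‖) ^ 2
        ≤ 1 - ‖discMobius a z‖ ^ 2 := by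
      rw [one_sub_sq_norm_discMobius ha hz]
      gcongr
    have hid : 1 - ((‖a‖ + ‖z‖) / (1 + ‖a‖ * ‖z‖)) ^ 2
        = (1 - ‖a‖ ^ 2) * (1 - ‖z‖ ^ 2) / (1 + ‖a‖ * ‖z‖) ^ 2 := by
      field_simp
      ring
    linarith
  exact (pow_le_pow_iff_left₀ (norm_nonneg _) (by positivity) two_ne_zero).mp hsq

end discMobius

lemma arctanh_eq_artanh {x : ℝ} (hx : x ∈ Icc (-1) 1) : arctanh x = Real.artanh x :=
  (Real.artanh_eq_half_log hx).symm

lemma arctanh_le_arctanh {x y : ℝ} (hx : -1 < x) (hxy : x ≤ y) (hy : y < 1) :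
    arctanh x ≤ arctanh y := by
  rw [arctanh_eq_artanh ⟨hx.le, by linarith⟩, arctanh_eq_artanh ⟨by linarith, hy.le⟩]
  exact Real.artanh_le_artanh hx hy hxy

lemma arctanh_lt_arctanh {x y : ℝ} (hx : -1 < x) (hxy : x < y) (hy : y < 1) :
    arctanh x < arctanh y := by
  rw [arctanh_eq_artanh ⟨hx.le, by linarith⟩, arctanh_eq_artanh ⟨by linarith, hy.le⟩]
  exact Real.artanh_lt_artanh hx hy hxy

lemma arctanh_add {x y : ℝ} (hx : x ∈ Ioo (-1) 1) (hy : y ∈ Ioo (-1) 1) :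
    arctanh x + arctanh y = arctanh ((x + y) / (1 + x * y)) := by
  obtain ⟨hx₀, hx₁⟩ := hx
  obtain ⟨hy₀, hy₁⟩ := hy
  have hxy : 0 < 1 + x * y := by nlinarith
  have hX : 0 < (1 + x) / (1 - x) := by apply div_pos <;> linarith
  have hY : 0 < (1 + y) / (1 - y) := by apply div_pos <;> linarith
  have hprod : (1 + (x + y) / (1 + x * y)) / (1 - (x + y) / (1 + x * y))
      = (1 + x) / (1 - x) * ((1 + y) / (1 - y)) := by
    have : 1 - x ≠ 0 := by linarith
    have : 1 - y ≠ 0 := by linarith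
    have : 1 + x * y - (x + y) ≠ 0 := by nlinarith
    field_simp
    ring
  rw [arctanh, arctanh, arctanh, hprod, Real.log_mul hX.ne' hY.ne']
  ring

lemma kD_comm (z w : ℂ) : kD z w = kD w z := by
  rw [kD_eq_arctanh_norm_discMobius, kD_eq_arctanh_norm_discMobius, norm_discMobius_comm]

lemma kD_zero_left (w : ℂ) : kD 0 w = arctanh ‖w‖ := by
  simp [kD]

lemma kD_zero_le_kD_zero {z w : ℂ} (hz : z ∈ unitDisc) (hwz : ‖w‖ ≤ ‖z‖) :
    kD 0 w ≤ kD 0 z := by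
  rw [kD_zero_left, kD_zero_left]
  exact arctanh_le_arctanh (neg_one_lt_zero.trans_le (norm_nonneg _)) hwz hz

lemma kD_triangle {a b c : ℂ} (ha : a ∈ unitDisc) (hb : b ∈ unitDisc) (hc : c ∈ unitDisc) :
    kD a c ≤ kD a b + kD b c := by
  set x := ‖discMobius a b‖
  set y := ‖discMobius b c‖
  have hx₀ : 0 ≤ x := norm_nonneg _
  have hy₀ : 0 ≤ y := norm_nonneg _
  have hx₁ : x < 1 := norm_discMobius_lt_one ha hb
  have hy₁ : y < 1 := norm_discMobius_lt_one hb hc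
  have hle : ‖discMobius a c‖ ≤ (x + y) / (1 + x * y) := by
    have hle' := norm_discMobius_le (discMobius_mapsTo hb ha) (discMobius_mapsTo hb hc)
    rwa [norm_discMobius_discMobius hb ha hc, norm_discMobius_comm b a] at hle'
  have hlt : (x + y) / (1 + x * y) < 1 := by
    rw [div_lt_one (by positivity)]
    nlinarith
  rw [kD_eq_arctanh_norm_discMobius, kD_eq_arctanh_norm_discMobius,
    kD_eq_arctanh_norm_discMobius, arctanh_add ⟨by linarith, hx₁⟩ ⟨by linarith, hy₁⟩]
  exact arctanh_le_arctanh (neg_one_lt_zero.trans_le (norm_nonneg _)) hle hlt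

theorem kD_le_kD_of_mapsTo {f : ℂ → ℂ} (hd : DifferentiableOn ℂ f unitDisc)
    (hm : MapsTo f unitDisc unitDisc) {a b : ℂ} (ha : a ∈ unitDisc) (hb : b ∈ unitDisc) :
    kD (f a) (f b) ≤ kD a b := by
  set F := discMobius (f a) ∘ f ∘ discMobius a
  have hFd : DifferentiableOn ℂ F unitDisc :=
    (differentiableOn_discMobius (hm ha)).comp
      (hd.comp (differentiableOn_discMobius ha) (discMobius_mapsTo ha))
      (hm.comp (discMobius_mapsTo ha))
  have hFm : MapsTo F unitDisc unitDisc :=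
    (discMobius_mapsTo (hm ha)).comp (hm.comp (discMobius_mapsTo ha))
  have hF0 : F 0 = 0 := by simp [F]
  have hab := discMobius_mapsTo ha hb
  have hschwarz : ‖F (discMobius a b)‖ ≤ ‖discMobius a b‖ := by
    rw [unitDisc_eq_ball] at hFd hFm hab
    exact Complex.norm_le_norm_of_mapsTo_ball hFd
      (hFm.mono_right Metric.ball_subset_closedBall) hF0 (mem_ball_zero_iff.mp hab)
  have hFab : F (discMobius a b) = discMobius (f a) (f b) := by
    simp [F, discMobius_discMobius ha hb]
  rw [hFab] at hschwarz
  exact arctanh_le_arctanh (neg_one_lt_zero.trans_le (norm_nonneg _)) hschwarz hab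

section orthProjection

variable {τ : ℂ}

lemma normSq_sub_ofReal_mul (hτ : ‖τ‖ = 1) (z : ℂ) (r : ℝ) :
    normSq (z - r * τ) = normSq z - 2 * (z * conj τ).re * r + r ^ 2 := by
  have hτ' : normSq τ = 1 := by rw [← Complex.sq_norm, hτ, one_pow]
  rw [normSq_sub, normSq_mul, normSq_ofReal, hτ', map_mul, conj_ofReal,
    mul_left_comm, re_ofReal_mul]
  ring

lemma normSq_one_sub_conj_mul_ofReal_mul (hτ : ‖τ‖ = 1) (z : ℂ) (r : ℝ) :
    normSq (1 - conj z * (r * τ)) = 1 - 2 * (z * conj τ).re * r + normSq z * r ^ 2 := by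
  have hτ' : normSq τ = 1 := by rw [← Complex.sq_norm, hτ, one_pow]
  rw [normSq_sub, normSq_mul, normSq_mul, normSq_ofReal, normSq_conj, hτ', normSq_one, one_mul,
    map_mul, map_mul, conj_conj, conj_ofReal, mul_left_comm z (r : ℂ), re_ofReal_mul]
  ring

lemma sq_norm_discMobius_ofReal_mul (hτ : ‖τ‖ = 1) (z : ℂ) (r : ℝ) :
    ‖discMobius z (r * τ)‖ ^ 2
      = (normSq z - 2 * (z * conj τ).re * r + r ^ 2)
        / (1 - 2 * (z * conj τ).re * r + normSq z * r ^ 2) := by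
  rw [discMobius, norm_div, div_pow, Complex.sq_norm, Complex.sq_norm,
    normSq_sub_ofReal_mul hτ, normSq_one_sub_conj_mul_ofReal_mul hτ]

/-- If `π(z) = rτ` were farther from `0` than `z`, the point `(|z|² / r) τ` of the diameter
would be strictly closer to `z`. -/
lemma exists_norm_discMobius_ofReal_mul_lt {z : ℂ} (hz : z ∈ unitDisc) (hτ : ‖τ‖ = 1) {r : ℝ}
    (hr : normSq z < r ^ 2) (hr₁ : |r| < 1) :
    ∃ s ∈ Ioo (-1 : ℝ) 1, ‖discMobius z (s * τ)‖ < ‖discMobius z (r * τ)‖ := by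
  have hne : z - r * τ ≠ 0 := by
    intro h
    apply hr.ne
    rw [sub_eq_zero.mp h, normSq_mul, normSq_ofReal, ← Complex.sq_norm τ, hτ]
    ring
  set m := normSq z
  set x := (z * conj τ).re
  have hm₀ : 0 ≤ m := normSq_nonneg z
  have hm₁ : m < 1 := by nlinarith [sq_abs r, abs_nonneg r]
  have hr₀ : r ≠ 0 := by rintro rfl; linarith
  have hmem : ∀ s : ℝ, |s| < 1 → ((s : ℂ) * τ) ∈ unitDisc := fun s hs => by
    simpa [unitDisc, hτ] using hs
  have hs₁ : |m / r| < 1 := by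
    rw [abs_div, abs_of_nonneg hm₀, div_lt_one (abs_pos.mpr hr₀)]
    nlinarith [sq_abs r, abs_nonneg r]
  have hD : ∀ s : ℝ, |s| < 1 → 0 < 1 - 2 * x * s + m * s ^ 2 := fun s hs => by
    rw [← normSq_one_sub_conj_mul_ofReal_mul hτ]
    exact normSq_pos.mpr (one_sub_conj_mul_ne_zero hz (hmem s hs))
  have hN : 0 < m - 2 * x * r + r ^ 2 := by
    rw [← normSq_sub_ofReal_mul hτ]
    exact normSq_pos.mpr hne
  have hkey : (m - 2 * x * r + r ^ 2) * (1 - 2 * x * (m / r) + m * (m / r) ^ 2)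
      - (m - 2 * x * (m / r) + (m / r) ^ 2) * (1 - 2 * x * r + m * r ^ 2)
      = (m - 2 * x * r + r ^ 2) * (1 - m ^ 2) * (r ^ 2 - m) / r ^ 2 := by
    field_simp
    ring
  have hpos : 0 < (m - 2 * x * r + r ^ 2) * (1 - m ^ 2) * (r ^ 2 - m) / r ^ 2 := by
    have h1m : 0 < 1 - m ^ 2 := by nlinarith
    have hrm : 0 < r ^ 2 - m := by linarith
    positivity
  have hsq : ‖discMobius z ((m / r : ℝ) * τ)‖ ^ 2 < ‖discMobius z (r * τ)‖ ^ 2 := by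
    rw [sq_norm_discMobius_ofReal_mul hτ, sq_norm_discMobius_ofReal_mul hτ,
      div_lt_div_iff₀ (hD _ hs₁) (hD r hr₁)]
    linarith
  exact ⟨m / r, abs_lt.mp hs₁,
    (pow_lt_pow_iff_left₀ (norm_nonneg _) (norm_nonneg _) two_ne_zero).mp hsq⟩

lemma norm_le_norm_of_isOrthProjection {p : ℂ → ℂ} {z : ℂ} (hτ : ‖τ‖ = 1) (hp : IsOrthProjection τ p)
    (hz : z ∈ unitDisc) : ‖p z‖ ≤ ‖z‖ := by
  obtain ⟨⟨r, hr, hpr⟩, hmin⟩ := hp z hz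
  have hr₁ : |r| < 1 := abs_lt.mpr hr
  have hpz : ‖p z‖ = |r| := by simp [hpr, hτ]
  suffices r ^ 2 ≤ normSq z by
    rw [hpz]
    exact (pow_le_pow_iff_left₀ (abs_nonneg r) (norm_nonneg z) two_ne_zero).mp
      (by rwa [sq_abs, Complex.sq_norm])
  by_contra! hlt
  obtain ⟨s, hs, hcloser⟩ := exists_norm_discMobius_ofReal_mul_lt hz hτ hlt hr₁
  have hmin_s := hmin s hs
  rw [hpr, kD_eq_arctanh_norm_discMobius, kD_eq_arctanh_norm_discMobius] at hmin_s
  exact hmin_s.not_gt (arctanh_lt_arctanh (neg_one_lt_zero.trans_le (norm_nonneg _)) hcloser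
    (norm_discMobius_lt_one hz (by simpa [unitDisc, hτ] using hr₁)))

lemma kD_zero_le_of_isOrthProjection {p : ℂ → ℂ} {z : ℂ} (hτ : ‖τ‖ = 1) (hp : IsOrthProjection τ p)
    (hz : z ∈ unitDisc) : kD 0 (p z) ≤ kD 0 z :=
  kD_zero_le_kD_zero hz (norm_le_norm_of_isOrthProjection hτ hp hz)

end orthProjection

section univalent

lemma AnalyticAt.exists_pow_eq {u : ℂ → ℂ} {z₀ : ℂ} (hu : AnalyticAt ℂ u z₀) (hu₀ : u z₀ ≠ 0)
    {n : ℕ} (hn : n ≠ 0) : ∃ v : ℂ → ℂ, AnalyticAt ℂ v z₀ ∧ ∀ z, v z ^ n = u z := by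
  obtain ⟨c, hc⟩ := IsAlgClosed.exists_pow_nat_eq (u z₀) (Nat.pos_of_ne_zero hn)
  refine ⟨fun z => c * (u z / u z₀) ^ (n⁻¹ : ℂ),
    analyticAt_const.mul ((hu.div analyticAt_const hu₀).cpow analyticAt_const ?_), fun z => ?_⟩
  · simp [hu₀]
  · rw [mul_pow, cpow_nat_inv_pow _ hn, hc]
    field_simp

lemma not_injOn_pow {n : ℕ} (hn : 2 ≤ n) {U : Set ℂ} (hU : U ∈ 𝓝 0) :
    ¬InjOn (· ^ n) U := by
  intro hinj
  set ζ := exp (2 * Real.pi * I / n)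
  have hζ : IsPrimitiveRoot ζ n := isPrimitiveRoot_exp n (by omega)
  have hζU : ∀ᶠ w in 𝓝 (0 : ℂ), ζ * w ∈ U :=
    (continuous_const_mul ζ).tendsto' 0 0 (mul_zero ζ) hU
  obtain ⟨w, ⟨hwU, hζwU⟩, hw₀⟩ :=
    (((Filter.eventually_of_mem hU fun _ h => h).and hζU).filter_mono nhdsWithin_le_nhds
      |>.and (eventually_mem_nhdsWithin (s := {0}ᶜ))).exists
  have hζw : ζ * w = w := hinj hζwU hwU (by simp [mul_pow, hζ.pow_eq_one])
  exact hζ.ne_one (by omega) (mul_right_cancel₀ hw₀ (hζw.trans (one_mul w).symm))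

lemma not_injOn_of_eventually_eq_add_pow {f φ : ℂ → ℂ} {c z₀ : ℂ} {n : ℕ} {s : Set ℂ}
    (hφ : HasStrictDerivAt φ c z₀) (hc : c ≠ 0) (hφ₀ : φ z₀ = 0) (hn : 2 ≤ n)
    (hf : ∀ᶠ z in 𝓝 z₀, f z = f z₀ + φ z ^ n) (hs : s ∈ 𝓝 z₀) : ¬InjOn f s := by
  intro hinj
  set V := s ∩ {z | f z = f z₀ + φ z ^ n}
  have hV : V ∈ 𝓝 z₀ := inter_mem hs hf
  have hφV : φ '' V ∈ 𝓝 0 := by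
    rw [← hφ₀, ← hφ.map_nhds_eq hc]
    exact image_mem_map hV
  refine not_injOn_pow hn hφV ?_
  rintro _ ⟨a, ha, rfl⟩ _ ⟨b, hb, rfl⟩ hab
  have hfab : f a = f b := by
    rw [ha.2, hb.2]
    exact congrArg (f z₀ + ·) hab
  rw [hinj ha.1 hb.1 hfab]

/-- At a critical point, `f = f z₀ + φⁿ` near `z₀` with `n ≥ 2` and `φ` a local coordinate,
while `w ↦ wⁿ` is not injective near `0`. -/
theorem deriv_ne_zero_of_injOn {f : ℂ → ℂ} {s : Set ℂ} {z₀ : ℂ} (hf : AnalyticAt ℂ f z₀)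
    (hs : s ∈ 𝓝 z₀) (hinj : InjOn f s) : deriv f z₀ ≠ 0 := by
  intro hderiv
  have hfin : analyticOrderAt (f · - f z₀) z₀ ≠ ⊤ := by
    rw [Ne, analyticOrderAt_eq_top]
    intro hconst
    obtain ⟨z, ⟨hz, hzs⟩, hzz₀⟩ :=
      ((hconst.and hs).filter_mono nhdsWithin_le_nhds
        |>.and (eventually_mem_nhdsWithin (s := {z₀}ᶜ))).exists
    exact hzz₀ (hinj hzs (mem_of_mem_nhds hs) (sub_eq_zero.mp hz))
  set n := analyticOrderNatAt (f · - f z₀) z₀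
  obtain ⟨u, hu, hu₀, hfu⟩ : ∃ u : ℂ → ℂ, AnalyticAt ℂ u z₀ ∧ u z₀ ≠ 0 ∧
      ∀ᶠ z in 𝓝 z₀, f z - f z₀ = (z - z₀) ^ n * u z :=
    (hf.sub analyticAt_const).analyticOrderAt_ne_top.mp hfin
  have hn : 2 ≤ n := by
    have hderiv_order : 1 ≤ analyticOrderAt (deriv f) z₀ :=
      Order.one_le_iff_ne_zero.mpr (analyticOrderAt_ne_zero.mpr ⟨hf.deriv, hderiv⟩)
    have : (2 : ℕ∞) ≤ n := by
      rw [Nat.cast_analyticOrderNatAt hfin, ← hf.analyticOrderAt_deriv_add_one]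
      calc (2 : ℕ∞) = 1 + 1 := by norm_num
        _ ≤ analyticOrderAt (deriv f) z₀ + 1 := by gcongr
    exact_mod_cast this
  obtain ⟨v, hv, hvn⟩ := hu.exists_pow_eq hu₀ (by omega : n ≠ 0)
  have hv₀ : v z₀ ≠ 0 := fun h => hu₀ (by rw [← hvn, h, zero_pow (by omega)])
  refine not_injOn_of_eventually_eq_add_pow (φ := fun z => (z - z₀) * v z) ?_ hv₀ (by simp) hn
    ?_ hs hinj
  · have hlin : HasStrictDerivAt (fun z => z - z₀) 1 z₀ := (hasStrictDerivAt_id z₀).sub_const z₀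
    simpa using hlin.fun_mul hv.hasStrictDerivAt
  · filter_upwards [hfu] with z hz
    rw [mul_pow, hvn, ← hz]
    ring

theorem hasStrictDerivAt_invFunOn {f : ℂ → ℂ} {s : Set ℂ} {a : ℂ} (hs : IsOpen s)
    (hf : DifferentiableOn ℂ f s) (hinj : InjOn f s) (ha : a ∈ s) :
    HasStrictDerivAt (Function.invFunOn f s) (deriv f a)⁻¹ (f a) := by
  have hA : AnalyticAt ℂ f a := hf.analyticAt (hs.mem_nhds ha)
  exact hA.hasStrictDerivAt.to_local_left_inverse (deriv_ne_zero_of_injOn hA (hs.mem_nhds ha) hinj)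
    (Filter.eventually_of_mem (hs.mem_nhds ha) hinj.leftInvOn_invFunOn)

end univalent

def subordinationMap (h htil : ℂ → ℂ) (z : ℂ) : ℂ := Function.invFunOn htil unitDisc (h z)

section subordination

variable {h htil : ℂ → ℂ} {z : ℂ}

lemma subordinationMap_mem (hsub : h '' unitDisc ⊆ htil '' unitDisc) (hz : z ∈ unitDisc) :
    subordinationMap h htil z ∈ unitDisc :=
  Function.invFunOn_mem (hsub (mem_image_of_mem h hz))

lemma apply_subordinationMap (hsub : h '' unitDisc ⊆ htil '' unitDisc) (hz : z ∈ unitDisc) :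
    htil (subordinationMap h htil z) = h z :=
  Function.invFunOn_eq (hsub (mem_image_of_mem h hz))

lemma differentiableOn_subordinationMap (hh : DifferentiableOn ℂ h unitDisc)
    (hhtil : DifferentiableOn ℂ htil unitDisc) (hinj : InjOn htil unitDisc)
    (hsub : h '' unitDisc ⊆ htil '' unitDisc) :
    DifferentiableOn ℂ (subordinationMap h htil) unitDisc := by
  intro z hz
  have hinv := HasStrictDerivAt.hasDerivAt
    (hasStrictDerivAt_invFunOn isOpen_unitDisc hhtil hinj (subordinationMap_mem hsub hz))
  rw [apply_subordinationMap hsub hz] at hinv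
  exact (hinv.differentiableAt.comp z
    (hh.differentiableAt (isOpen_unitDisc.mem_nhds hz))).differentiableWithinAt

lemma subordinationMap_apply_semigroup {φ ψ : ℝ → ℂ → ℂ} (hφ : IsDiscSemigroup φ)
    (hψ : IsDiscSemigroup ψ) (hKoe : IsKoenigs φ h) (hKoetil : IsKoenigs ψ htil)
    (hsub : h '' unitDisc ⊆ htil '' unitDisc) {t : ℝ} (ht : 0 ≤ t) (hz : z ∈ unitDisc) :
    subordinationMap h htil (φ t z) = ψ t (subordinationMap h htil z) := by
  have hGz := subordinationMap_mem hsub hz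
  refine hKoetil.2.1 (subordinationMap_mem hsub (hφ.mapsTo t ht hz)) (hψ.mapsTo t ht hGz) ?_
  rw [apply_subordinationMap hsub (hφ.mapsTo t ht hz), hKoe.2.2 t ht z hz,
    hKoetil.2.2 t ht _ hGz, apply_subordinationMap hsub hz]

end subordination

lemma kD_zero_le_of_semiconj {F G : ℂ → ℂ} (hF : DifferentiableOn ℂ F unitDisc)
    (hFm : MapsTo F unitDisc unitDisc) (hG : DifferentiableOn ℂ G unitDisc)
    (hGm : MapsTo G unitDisc unitDisc) {z : ℂ} (hz : z ∈ unitDisc) (hFG : F (G 0) = G z) :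
    kD 0 (F 0) ≤ kD 0 z + 2 * kD 0 (G 0) := by
  have h0 := zero_mem_unitDisc
  have hG0 := hGm h0
  calc kD 0 (F 0) ≤ kD 0 (F (G 0)) + kD (F (G 0)) (F 0) := kD_triangle h0 (hFm hG0) (hFm h0)
    _ ≤ (kD 0 (G 0) + kD (G 0) (F (G 0))) + kD (G 0) 0 :=
      add_le_add (kD_triangle h0 hG0 (hFm hG0)) (kD_le_kD_of_mapsTo hF hFm hG0 h0)
    _ ≤ (kD 0 (G 0) + kD 0 z) + kD 0 (G 0) := by
      rw [hFG, kD_comm (G 0) 0]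
      gcongr
      exact kD_le_kD_of_mapsTo hG hGm h0 hz
    _ = kD 0 z + 2 * kD 0 (G 0) := by ring

lemma bot_lt_liminf_coe_of_eventually_le {α : Type*} {l : Filter α} {u : α → ℝ} (c : ℝ)
    (hu : ∀ᶠ x in l, c ≤ u x) : ⊥ < liminf (fun x => (u x : EReal)) l :=
  (EReal.bot_lt_coe c).trans_le
    (le_liminf_of_le (by isBoundedDefault) (hu.mono fun _ hx => EReal.coe_le_coe_iff.mpr hx))

theorem totalSpeed_liminf_sub_orthSpeed_gt_bot_general
    (φ ψ : ℝ → ℂ → ℂ) (h htil : ℂ → ℂ) (τtil : ℂ) (ptil : ℂ → ℂ)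
    (hφ : IsNonElliptic φ) (hψ : IsNonElliptic ψ)
    (hτtil : IsDenjoyWolff ψ τtil)
    (hKoe : IsKoenigs φ h) (hKoetil : IsKoenigs ψ htil)
    (hptil : IsOrthProjection τtil ptil)
    (hsub : h '' unitDisc ⊆ htil '' unitDisc) :
    Filter.liminf (fun t : ℝ =>
        ((totalSpeed φ t - orthSpeed ψ ptil t : ℝ) : EReal)) atTop > ⊥ := by
  set G := subordinationMap h htil
  have h0 := zero_mem_unitDisc
  have hG : DifferentiableOn ℂ G unitDisc :=
    differentiableOn_subordinationMap hKoe.1 hKoetil.1 hKoetil.2.1 hsub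
  have hbound (t : ℝ) (ht : 0 ≤ t) :
      orthSpeed ψ ptil t ≤ totalSpeed φ t + 2 * kD 0 (G 0) :=
    (kD_zero_le_of_isOrthProjection hτtil.1 hptil (hψ.mapsTo t ht h0)).trans <|
      kD_zero_le_of_semiconj (hψ.holo t ht) (hψ.mapsTo t ht) hG
        (fun _ hz => subordinationMap_mem hsub hz) (hφ.mapsTo t ht h0)
        (subordinationMap_apply_semigroup hφ.toIsDiscSemigroup hψ.toIsDiscSemigroup hKoe hKoetil
          hsub ht h0).symm
  refine bot_lt_liminf_coe_of_eventually_le (-(2 * kD 0 (G 0))) ?_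
  filter_upwards [eventually_ge_atTop 0] with t ht
  linarith [hbound t ht]

/-- **Remark 3.1:** if `h(𝔻) ⊆ h̃(𝔻)`, then `liminf [v(t) − ṽ^o(t)] > −∞`, comparing the
total speed of the smaller semigroup with the orthogonal speed of the larger one. -/
theorem totalSpeed_liminf_sub_orthSpeed_gt_bot
    (φ ψ : ℝ → ℂ → ℂ) (h htil : ℂ → ℂ) (τ τtil : ℂ) (p ptil : ℂ → ℂ)
    (hφ : IsNonElliptic φ) (hψ : IsNonElliptic ψ)
    (hτ : IsDenjoyWolff φ τ) (hτtil : IsDenjoyWolff ψ τtil)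
    (hKoe : IsKoenigs φ h) (hKoetil : IsKoenigs ψ htil)
    (hp : IsOrthProjection τ p) (hptil : IsOrthProjection τtil ptil)
    (hsub : h '' unitDisc ⊆ htil '' unitDisc) :
    Filter.liminf (fun t : ℝ =>
        ((totalSpeed φ t - orthSpeed ψ ptil t : ℝ) : EReal)) atTop > ⊥ :=
  totalSpeed_liminf_sub_orthSpeed_gt_bot_general φ ψ h htil τtil ptil hφ hψ hτtil hKoe hKoetil hptil
    hsub
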